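/- arXiv:2005.06781 — 2 statements merged into one kernel-verified Lean document; each statement's English description precedes it below -/
import Mathlib

section
/- For every S₀ > 0 and I₀ > 0, there exists a unique S∞ ∈ (0, S₀) with S∞ ≤ μ/α such that (α/μ)S∞ - ln(S∞) = (α/μ)S₀ - ln(S₀) + (α/μ)I₀. More generally, there is a unique solution S∞ of this equation satisfying S∞ ≤ S₀. -/
/-!
Write `r = α / μ` and `f x = r * x - log x`. Then `f` decreases strictly on `(0, 1/r]`, increases
on `[1/r, ∞)` and tends to `+∞` at `0⁺`. The right-hand side exceeds `f S₀`, so the intermediate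
value theorem gives a root in `(0, S₀)`. Any root `T ≤ S₀` lies below `1/r`, since otherwise
`f T ≤ f S₀`, and `f` is injective there.
-/

open Real Set Filter Topology

section MulSubLog

variable {r b c : ℝ}

lemma hasDerivAt_mul_sub_log (r : ℝ) {x : ℝ} (hx : 0 < x) :
    HasDerivAt (fun x ↦ r * x - log x) (r - x⁻¹) x :=
  (by simpa using (hasDerivAt_id x).const_mul r : HasDerivAt (r * ·) r x).sub
    (hasDerivAt_log hx.ne')

lemma continuousOn_mul_sub_log (r : ℝ) : ContinuousOn (fun x ↦ r * x - log x) (Ioi 0) :=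
  (continuousOn_const.mul continuousOn_id).sub <| continuousOn_log.mono fun _ hx ↦ ne_of_gt hx

lemma strictAntiOn_mul_sub_log (r : ℝ) : StrictAntiOn (fun x ↦ r * x - log x) (Ioc 0 r⁻¹) := by
  refine strictAntiOn_of_deriv_neg (convex_Ioc 0 r⁻¹)
    ((continuousOn_mul_sub_log r).mono Ioc_subset_Ioi_self) fun x hx ↦ ?_
  rw [interior_Ioc] at hx
  rw [(hasDerivAt_mul_sub_log r hx.1).deriv, sub_neg]
  have hr : 0 < r := inv_pos.1 (hx.1.trans hx.2)
  exact (lt_inv_comm₀ hx.1 hr).1 hx.2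

lemma strictMonoOn_mul_sub_log (hr : 0 < r) : StrictMonoOn (fun x ↦ r * x - log x) (Ici r⁻¹) := by
  refine strictMonoOn_of_deriv_pos (convex_Ici r⁻¹)
    ((continuousOn_mul_sub_log r).mono fun x hx ↦ (inv_pos.2 hr).trans_le hx) fun x hx ↦ ?_
  rw [interior_Ici] at hx
  have hx0 : 0 < x := (inv_pos.2 hr).trans hx
  rw [(hasDerivAt_mul_sub_log r hx0).deriv, sub_pos]
  exact (inv_lt_comm₀ hr hx0).1 hx

lemma tendsto_mul_sub_log_nhdsGT_zero (r : ℝ) :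
    Tendsto (fun x ↦ r * x - log x) (𝓝[>] 0) atTop := by
  have hlin : Tendsto (fun x ↦ r * x) (𝓝[>] 0) (𝓝 0) := by
    simpa using ((continuous_const_mul r).tendsto 0).mono_left nhdsWithin_le_nhds
  simpa only [sub_eq_add_neg, Function.comp_def] using
    hlin.add_atTop (tendsto_neg_atBot_atTop.comp tendsto_log_nhdsGT_zero)

lemma lt_inv_of_mul_sub_log_lt (hr : 0 < r) {x : ℝ} (hx : x ∈ Ioc 0 b)
    (hbx : r * b - log b < r * x - log x) : x < r⁻¹ := by
  by_contra! h
  exact (strictMonoOn_mul_sub_log hr).monotoneOn h (h.trans hx.2) hx.2 |>.not_gt hbx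

lemma injOn_mul_sub_log (hr : 0 < r) :
    InjOn (fun x ↦ r * x - log x) {x ∈ Ioc 0 b | r * b - log b < r * x - log x} :=
  (strictAntiOn_mul_sub_log r).injOn.mono fun _ hx ↦
    mem_Ioc.2 ⟨hx.1.1, (lt_inv_of_mul_sub_log_lt hr hx.1 hx.2).le⟩

lemma exists_mul_sub_log_eq (hb : 0 < b) (hc : r * b - log b < c) :
    ∃ x ∈ Ioo 0 b, r * x - log x = c := by
  obtain ⟨a, hca, ha⟩ := (((tendsto_mul_sub_log_nhdsGT_zero r).eventually_gt_atTop c).and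
    (Ioo_mem_nhdsGT hb)).exists
  obtain ⟨x, hx, hfx⟩ := intermediate_value_Ioo' ha.2.le
    ((continuousOn_mul_sub_log r).mono fun _ hy ↦ ha.1.trans_le hy.1) ⟨hc, hca⟩
  exact ⟨x, ⟨ha.1.trans hx.1, hx.2⟩, hfx⟩

end MulSubLog

/-- For every S₀ > 0 and I₀ > 0, there exists a unique S∞ ∈ (0, S₀) with
S∞ ≤ μ/α such that (α/μ)S∞ - ln S∞ = (α/μ)S₀ - ln S₀ + (α/μ)I₀; more generally there
is a unique solution with S∞ ≤ S₀. -/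
theorem stmt2 (α μ : ℝ) (hα : 0 < α) (hμ : 0 < μ)
    (S₀ I₀ : ℝ) (hS₀ : 0 < S₀) (hI₀ : 0 < I₀) :
    (∃! S : ℝ, (S ∈ Set.Ioo 0 S₀ ∧ S ≤ μ / α) ∧
      (α / μ) * S - Real.log S = (α / μ) * S₀ - Real.log S₀ + (α / μ) * I₀) ∧
    (∃! S : ℝ, (0 < S ∧ S ≤ S₀) ∧
      (α / μ) * S - Real.log S = (α / μ) * S₀ - Real.log S₀ + (α / μ) * I₀) := by
  have hr : 0 < α / μ := div_pos hα hμ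
  have hc : α / μ * S₀ - log S₀ < α / μ * S₀ - log S₀ + α / μ * I₀ :=
    lt_add_of_pos_right _ (mul_pos hr hI₀)
  obtain ⟨S, hS, hSeq⟩ := exists_mul_sub_log_eq hS₀ hc
  have hSsol : S ∈ {x ∈ Ioc 0 S₀ | α / μ * S₀ - log S₀ < α / μ * x - log x} :=
    ⟨Ioo_subset_Ioc_self hS, hSeq ▸ hc⟩
  have huniq : ∀ T, (0 < T ∧ T ≤ S₀) → α / μ * T - log T = α / μ * S₀ - log S₀ + α / μ * I₀ →
      T = S := fun T hT hTeq ↦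
    injOn_mul_sub_log hr ⟨hT, hTeq ▸ hc⟩ hSsol (hTeq.trans hSeq.symm)
  have hSle : S ≤ μ / α := by
    simpa only [inv_div] using (lt_inv_of_mul_sub_log_lt hr hSsol.1 hSsol.2).le
  exact ⟨⟨S, ⟨⟨hS, hSle⟩, hSeq⟩, fun T ⟨⟨hT, _⟩, hTeq⟩ ↦ huniq T ⟨hT.1, hT.2.le⟩ hTeq⟩,
    ⟨S, ⟨⟨hS.1, hS.2.le⟩, hSeq⟩, fun T ⟨hT, hTeq⟩ ↦ huniq T hT hTeq⟩⟩
end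

section
/- Fix S₀ > μ/α and let S* < S₀ be the unique solution in (0, μ/α) of f(S*) = f(S₀), where f(x) = (α/μ)x - ln x. For I₀ > 0 let S∞(I₀) be the unique solution of f(S∞) = f(S₀) + (α/μ)I₀ with S∞ ≤ S₀. Then S∞(I₀) → S* as I₀ → 0⁺; in particular there is ε > 0 such that S∞(I₀) ≤ S₀ - ε for all I₀ > 0. -/
/-!
`f(x) = a x - log x` (with `a = α/μ`) decreases on `(0, 1/a]` and increases on `[1/a, ∞)`.
Since `f(S∞) = f(S*) + a I₀ > f(S₀)` and `S∞ ≤ S₀`, the value `S∞` can lie neither on the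
increasing branch nor to the right of `S*` on the decreasing one, so `S∞ < S*`; this gives
`ε = S₀ - S*`. On the decreasing branch, `f(S∞) → f(S*)` forces `S∞ → S*`.
-/

open Real Set Filter Topology

namespace MulSubLog

variable {a : ℝ}

theorem strictAntiOn (ha : 0 < a) : StrictAntiOn (fun x => a * x - log x) (Ioc 0 a⁻¹) := by
  rintro x ⟨hx, -⟩ y ⟨hy, hya⟩ hxy
  have hlog : log (x / y) < x / y - 1 :=
    log_lt_sub_one_of_pos (div_pos hx hy) (div_ne_one_of_ne hxy.ne)
  have hay : a * y ≤ 1 := by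
    simpa [ha.ne'] using mul_le_mul_of_nonneg_left hya ha.le
  have hgap : a * (y - x) ≤ (y - x) / y := by
    rw [le_div_iff₀ hy]; nlinarith
  have hquot : x / y - 1 = -((y - x) / y) := by field_simp; ring
  rw [log_div hx.ne' hy.ne', hquot] at hlog
  show a * y - log y < a * x - log x
  linarith

theorem strictMonoOn (ha : 0 < a) : StrictMonoOn (fun x => a * x - log x) (Ici a⁻¹) := by
  rintro x hxa y hya hxy
  have hx : 0 < x := (inv_pos.2 ha).trans_le hxa
  have hy : 0 < y := hx.trans hxy
  have hlog : log (y / x) < y / x - 1 :=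
    log_lt_sub_one_of_pos (div_pos hy hx) (div_ne_one_of_ne hxy.ne')
  have hax : 1 ≤ a * x := by
    simpa [ha.ne'] using mul_le_mul_of_nonneg_left (show a⁻¹ ≤ x from hxa) ha.le
  have hgap : (y - x) / x ≤ a * (y - x) := by
    rw [div_le_iff₀ hx]; nlinarith
  have hquot : y / x - 1 = (y - x) / x := by field_simp
  rw [log_div hy.ne' hx.ne', hquot] at hlog
  show a * x - log x < a * y - log y
  linarith

theorem lt_of_level_lt {s S x : ℝ} (ha : 0 < a) (hs : s ∈ Ioc 0 a⁻¹) (hx : 0 < x)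
    (hxS : x ≤ S) (hsS : a * s - log s = a * S - log S)
    (hSx : a * S - log S < a * x - log x) : x < s := by
  by_contra! hsx
  rcases le_or_gt x a⁻¹ with hxa | hxa
  · have := (strictAntiOn ha).antitoneOn hs ⟨hx, hxa⟩ hsx
    linarith
  · have := (strictMonoOn ha).monotoneOn hxa.le (hxa.le.trans hxS) hxS
    linarith

theorem tendsto_of_tendsto_apply {s : ℝ} (ha : 0 < a) (hs : s ∈ Ioc 0 a⁻¹) {l : Filter ℝ}
    {g : ℝ → ℝ} (hg : ∀ᶠ t in l, g t ∈ Ioc 0 s)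
    (hfg : Tendsto (fun t => a * g t - log (g t)) l (𝓝 (a * s - log s))) :
    Tendsto g l (𝓝 s) := by
  refine tendsto_order.2 ⟨fun b hb => ?_, fun b hb => hg.mono fun t ht => ht.2.trans_lt hb⟩
  have hcs : max b (s / 2) < s := max_lt hb (half_lt_self hs.1)
  have hc : max b (s / 2) ∈ Ioc 0 a⁻¹ :=
    ⟨lt_max_of_lt_right (half_pos hs.1), hcs.le.trans hs.2⟩
  have hfc := strictAntiOn ha hc hs hcs
  filter_upwards [hg, (tendsto_order.1 hfg).2 _ hfc] with t ⟨hgt, hgts⟩ hft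
  by_contra! hgb
  have := (strictAntiOn ha).antitoneOn ⟨hgt, hgts.trans hs.2⟩ hc (hgb.trans (le_max_left _ _))
  linarith

end MulSubLog

/-- Fix S₀ > μ/α and let S* ∈ (0, μ/α) be the unique solution of
f(S*) = f(S₀) with f(x) = (α/μ)x - ln x. If S∞(I₀) is the solution of
f(S∞) = f(S₀) + (α/μ)I₀ with S∞ ≤ S₀, then S∞(I₀) → S* as I₀ → 0⁺; in particular
there is ε > 0 with S∞(I₀) ≤ S₀ - ε for all I₀ > 0. -/
theorem stmt4 (α μ S₀ Sstar : ℝ) (hα : 0 < α) (hμ : 0 < μ) (hS₀ : μ / α < S₀)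
    (hSstar : Sstar ∈ Set.Ioo 0 (μ / α))
    (hfSstar : (α / μ) * Sstar - Real.log Sstar = (α / μ) * S₀ - Real.log S₀)
    (Sinf : ℝ → ℝ)
    (hSinf : ∀ I₀ > (0 : ℝ), (0 < Sinf I₀ ∧ Sinf I₀ ≤ S₀) ∧
      (α / μ) * Sinf I₀ - Real.log (Sinf I₀)
        = ((α / μ) * S₀ - Real.log S₀) + (α / μ) * I₀) :
    Filter.Tendsto Sinf (nhdsWithin 0 (Set.Ioi 0)) (nhds Sstar) ∧
    ∃ ε > (0 : ℝ), ∀ I₀ > (0 : ℝ), Sinf I₀ ≤ S₀ - ε := by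
  have ha : 0 < α / μ := div_pos hα hμ
  have hSstar' : Sstar ∈ Ioc 0 (α / μ)⁻¹ := by
    rw [inv_div]
    exact Ioo_subset_Ioc_self hSstar
  have hlt : ∀ I₀ > 0, Sinf I₀ < Sstar := fun I₀ hI₀ => by
    obtain ⟨⟨hpos, hle⟩, heq⟩ := hSinf I₀ hI₀
    exact MulSubLog.lt_of_level_lt ha hSstar' hpos hle hfSstar
      (by linarith [mul_pos ha hI₀])
  refine ⟨MulSubLog.tendsto_of_tendsto_apply ha hSstar' ?_ ?_,
    S₀ - Sstar, by linarith [hSstar.2], fun I₀ hI₀ => by linarith [hlt I₀ hI₀]⟩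
  · filter_upwards [self_mem_nhdsWithin] with I₀ hI₀
    exact ⟨(hSinf I₀ hI₀).1.1, (hlt I₀ hI₀).le⟩
  · have hlim : Tendsto (fun I₀ => α / μ * Sstar - log Sstar + α / μ * I₀) (𝓝[>] 0)
        (𝓝 (α / μ * Sstar - log Sstar)) := by
      refine tendsto_nhdsWithin_of_tendsto_nhds ?_
      have hcont : Continuous fun I₀ : ℝ => α / μ * Sstar - log Sstar + α / μ * I₀ := by
        fun_prop
      simpa using hcont.tendsto 0
    refine hlim.congr' ?_
    filter_upwards [self_mem_nhdsWithin] with I₀ hI₀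
    rw [(hSinf I₀ hI₀).2, hfSstar]
end
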